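/- arXiv:2307.11879 — 2 statements merged into one kernel-verified Lean document; each statement's English description precedes it below -/
import Mathlib

section
/- Let V be a finite type of nodes, E ⊆ V × V a set of directed edges, and s : V × V → ℕ a security level function. If there exists at least one valid path from a node a to a node b with a ≠ b, then there exists a valid simple path p* from a to b whose bottleneck (the minimum of s over its edges) satisfies bottleneck(p*) ≥ bottleneck(p) for every valid path p from a to b (simple or not). In other words, the widest (maximal-bottleneck) path value from a to b is attained by a simple path. -/
/-!
Bottlenecks of paths are values of `s` on the finite set `V × V`, so some valid path `p` has the
largest bottleneck. Erasing the loops of `p` leaves a simple valid path all of whose edges are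
edges of `p`; a minimum over fewer edges can only be larger, so this simple path is widest too.
-/

/-- A (nonempty) valid path in the network `(V, E)` from `a` to `b`:
a nonempty list of edges, each belonging to `E`, consecutively connected
(`dst eᵢ = src e_{i+1}`), starting at `a` and ending at `b`. -/
def IsValidPath {V : Type*} (E : Set (V × V)) (a b : V) (p : List (V × V)) : Prop :=
  (∀ e ∈ p, e ∈ E) ∧ List.Chain' (fun e f => e.2 = f.1) p ∧
    p.head?.map Prod.fst = some a ∧ p.getLast?.map Prod.snd = some b

/-- The nodes traversed by a path: the sources of all edges plus the final destination. -/
def pathNodes {V : Type*} (p : List (V × V)) : List V :=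
  p.map Prod.fst ++ (p.getLast?.map Prod.snd).toList

/-- A path is simple if it traverses no node twice. -/
def IsSimplePath {V : Type*} (p : List (V × V)) : Prop :=
  (pathNodes p).Nodup

/-- The bottleneck of a (nonempty) path: the minimum of `s` over its edges. -/
def bottleneck {V : Type*} (s : V × V → ℕ) (p : List (V × V)) : ℕ :=
  WithTop.untopD 0 ((p.map s).minimum)

section Paths

variable {V : Type*} {E : Set (V × V)} {a b c : V} {e : V × V} {p q : List (V × V)}

lemma IsValidPath.ne_nil (hp : IsValidPath E a b p) : p ≠ [] := by
  rintro rfl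
  simp [IsValidPath] at hp

lemma IsValidPath.pathNodes_eq (hp : IsValidPath E a b p) :
    pathNodes p = p.map Prod.fst ++ [b] := by
  simp [pathNodes, hp.2.2.2]

lemma isValidPath_singleton (he : (a, b) ∈ E) : IsValidPath E a b [(a, b)] :=
  ⟨by simpa using he, List.isChain_singleton _, rfl, rfl⟩

lemma IsValidPath.cons (he : (a, c) ∈ E) (hp : IsValidPath E c b p) :
    IsValidPath E a b ((a, c) :: p) := by
  obtain ⟨f, p, rfl⟩ := List.exists_cons_of_ne_nil hp.ne_nil
  obtain ⟨hE, hchain, hhead, hlast⟩ := hp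
  exact ⟨by simp_all, List.isChain_cons_cons.mpr ⟨by simp_all, hchain⟩, rfl, by simpa using hlast⟩

lemma IsValidPath.of_cons (hp : IsValidPath E a b (e :: p)) (hb : e.2 ≠ b) :
    IsValidPath E e.2 b p := by
  obtain ⟨hE, hchain, -, hlast⟩ := hp
  rcases p with _ | ⟨f, p⟩
  · simp_all
  · obtain ⟨hef, hchain⟩ := List.isChain_cons_cons.mp hchain
    exact ⟨fun g hg => hE g (by simp_all), hchain, by simp [hef], by simpa using hlast⟩

lemma IsValidPath.suffix (hp : IsValidPath E a b (p ++ e :: q)) :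
    IsValidPath E e.1 b (e :: q) := by
  obtain ⟨hE, hchain, -, hlast⟩ := hp
  refine ⟨fun f hf => hE f (by simp_all), hchain.right_of_append, by simp, ?_⟩
  simpa [List.getLast?_append] using hlast

lemma pathNodes_cons (e : V × V) (hp : p ≠ []) : pathNodes (e :: p) = e.1 :: pathNodes p := by
  simp [pathNodes, List.getLast?_cons, List.getLast?_eq_some_getLast hp]

lemma pathNodes_append (p : List (V × V)) (hq : q ≠ []) :
    pathNodes (p ++ q) = p.map Prod.fst ++ pathNodes q := by
  simp [pathNodes, List.getLast?_append, List.getLast?_eq_some_getLast hq]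

lemma isSimplePath_singleton (hab : a ≠ b) : IsSimplePath [(a, b)] := by
  simp [IsSimplePath, pathNodes, hab]

lemma IsSimplePath.cons (hp : IsSimplePath p) (hp0 : p ≠ []) (he : e.1 ∉ pathNodes p) :
    IsSimplePath (e :: p) := by
  rw [IsSimplePath, pathNodes_cons e hp0]
  exact List.nodup_cons.mpr ⟨he, hp⟩

lemma IsSimplePath.of_append (hpq : IsSimplePath (p ++ q)) (hq : q ≠ []) : IsSimplePath q := by
  rw [IsSimplePath, pathNodes_append p hq] at hpq
  exact hpq.of_append_right

end Paths

section Bottleneck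

variable {V : Type*} {s : V × V → ℕ} {e : V × V} {p q : List (V × V)}

lemma bottleneck_le_of_mem (he : e ∈ p) : bottleneck s p ≤ s e :=
  WithTop.untopD_le (List.minimum_le_of_mem' (List.mem_map_of_mem he))

lemma bottleneck_le_bottleneck_of_subset (hq : q ≠ []) (hqp : q ⊆ p) :
    bottleneck s p ≤ bottleneck s q :=
  WithTop.untopD_mono (List.minimum_ne_top_of_ne_nil (by simpa using hq))
    (List.minimum_anti (List.map_subset s hqp))

end Bottleneck

section LoopErasure

variable {V : Type*} {E : Set (V × V)} {a b c : V} {p : List (V × V)}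

lemma IsValidPath.exists_simple_suffix_from (hp : IsValidPath E c b p) (hs : IsSimplePath p)
    (ha : a ∈ pathNodes p) (hab : a ≠ b) :
    ∃ q, IsValidPath E a b q ∧ IsSimplePath q ∧ q <:+ p := by
  rw [hp.pathNodes_eq] at ha
  obtain ⟨e, he, rfl⟩ : ∃ e ∈ p, e.1 = a := by simpa [hab] using ha
  obtain ⟨l, t, rfl⟩ := List.append_of_mem he
  exact ⟨e :: t, hp.suffix, hs.of_append (List.cons_ne_nil e t), List.suffix_append l _⟩

theorem IsValidPath.exists_simple_subpath (hab : a ≠ b) (hp : IsValidPath E a b p) :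
    ∃ q, IsValidPath E a b q ∧ IsSimplePath q ∧ q ⊆ p := by
  induction p generalizing a with
  | nil => exact absurd rfl hp.ne_nil
  | cons e p ih =>
    obtain ⟨x, c⟩ := e
    obtain rfl : x = a := by simpa using hp.2.2.1
    have hxc : (x, c) ∈ E := hp.1 _ List.mem_cons_self
    by_cases hcb : c = b
    · subst hcb
      exact ⟨[(x, c)], isValidPath_singleton hxc, isSimplePath_singleton hab, by simp⟩
    obtain ⟨q, hq, hqs, hqp⟩ := ih hcb (hp.of_cons hcb)
    by_cases hxq : x ∈ pathNodes q
    · obtain ⟨r, hr, hrs, hrq⟩ := hq.exists_simple_suffix_from hqs hxq hab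
      exact ⟨r, hr, hrs, fun f hf => List.mem_cons_of_mem _ (hqp (hrq.subset hf))⟩
    · exact ⟨(x, c) :: q, hq.cons hxc, hqs.cons hq.ne_nil hxq, List.cons_subset_cons _ hqp⟩

end LoopErasure

theorem exists_widest_path {V : Type*} [Finite V] {E : Set (V × V)} {a b : V}
    (s : V × V → ℕ) (h : ∃ p, IsValidPath E a b p) :
    ∃ p, IsValidPath E a b p ∧ ∀ q, IsValidPath E a b q → bottleneck s q ≤ bottleneck s p := by
  obtain ⟨M, hM⟩ := (Set.finite_range s).bddAbove
  have hbdd : BddAbove (bottleneck s '' {p | IsValidPath E a b p}) := by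
    refine ⟨M, ?_⟩
    rintro _ ⟨p, hp, rfl⟩
    exact (bottleneck_le_of_mem (List.head_mem hp.ne_nil)).trans (hM ⟨_, rfl⟩)
  obtain ⟨p, hp, hp_sSup⟩ := Nat.sSup_mem (Set.Nonempty.image _ h) hbdd
  exact ⟨p, hp, fun q hq => hp_sSup ▸ le_csSup hbdd ⟨q, hq, rfl⟩⟩

/-- If some valid path from `a` to `b` (`a ≠ b`) exists, then there is a valid *simple*
path from `a` to `b` whose bottleneck is maximal among the bottlenecks of all valid
paths from `a` to `b`. -/
theorem farsec_widest_path_attained_by_simple_path {V : Type*} [Fintype V]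
    (E : Set (V × V)) (s : V × V → ℕ) (a b : V) (hab : a ≠ b)
    (h : ∃ p : List (V × V), IsValidPath E a b p) :
    ∃ pstar : List (V × V), IsValidPath E a b pstar ∧ IsSimplePath pstar ∧
      ∀ p : List (V × V), IsValidPath E a b p → bottleneck s p ≤ bottleneck s pstar := by
  obtain ⟨p, hp, hp_widest⟩ := exists_widest_path s h
  obtain ⟨q, hq, hq_simple, hqp⟩ := hp.exists_simple_subpath hab
  exact ⟨q, hq, hq_simple, fun r hr =>
    (hp_widest r hr).trans (bottleneck_le_bottleneck_of_subset hq.ne_nil hqp)⟩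
end

section
/- (Correctness of the Floyd–Warshall update for widest paths.) Let n ∈ ℕ, let the nodes be Fin n, let E ⊆ Fin n × Fin n be an edge set and s : Fin n × Fin n → ℕ a security level function. For a set K ⊆ Fin n and nodes i, j, let W_K(i, j) ∈ WithBot ℕ denote the supremum, over all valid paths from i to j whose intermediate nodes (all nodes of the path other than i and j) lie in K, of the bottleneck of the path (with W_K(i, j) = ⊥ when no such path exists). Then for every k ∉ K and all nodes i, j: W_{K ∪ {k}}(i, j) = max( W_K(i, j), min( W_K(i, k), W_K(k, j) ) ). -/
/-- `restrictedWidest E s K i j` is the supremum, over all valid paths from `i` to `j`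
whose intermediate nodes (the sources of all edges but the first) lie in `K`, of the
bottleneck of the path, in `WithBot ℕ` (`⊥` when no such path exists). -/
noncomputable def restrictedWidest {n : ℕ} (E : Set (Fin n × Fin n))
    (s : Fin n × Fin n → ℕ) (K : Set (Fin n)) (i j : Fin n) : WithBot ℕ :=
  sSup {x : WithBot ℕ | ∃ p : List (Fin n × Fin n),
    IsValidPath E i j p ∧ (∀ v ∈ p.tail.map Prod.fst, v ∈ K) ∧
      x = (bottleneck s p : WithBot ℕ)}

/-!
A path whose intermediate nodes lie in `K ∪ {k}` either avoids `k`, and then it is a `K`-path,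
or it splits at its first intermediate visit of `k` into a `K`-path from `i` to `k` and a
`K ∪ {k}`-path from `k` to `j`. Cutting a path starting at `k` at its next visit of `k` can only
raise the bottleneck, so by induction on the length the second piece is dominated by
`W_K(k, j)`. Conversely, concatenating `K`-paths `i → k` and `k → j` gives a `K ∪ {k}`-path
whose bottleneck is the minimum of theirs; the suprema involved are attained because the
bottlenecks range over the finite set of values of `s`.
-/

variable {V : Type*}

def intermediateNodes (p : List (V × V)) : List V := p.tail.map Prod.fst

namespace IsValidPath

variable {E : Set (V × V)} {a b c : V} {p p₁ p₂ : List (V × V)}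

theorem ne_nil_s5 (h : IsValidPath E a b p) : p ≠ [] := by
  rintro rfl
  simp [IsValidPath] at h

theorem append (h₁ : IsValidPath E a b p₁) (h₂ : IsValidPath E b c p₂) :
    IsValidPath E a c (p₁ ++ p₂) := by
  have hne₁ := h₁.ne_nil_s5
  have hne₂ := h₂.ne_nil_s5
  obtain ⟨hE₁, hC₁, hh₁, hl₁⟩ := h₁
  obtain ⟨hE₂, hC₂, hh₂, hl₂⟩ := h₂
  refine ⟨?_, List.isChain_append.2 ⟨hC₁, hC₂, ?_⟩, ?_, ?_⟩
  · grind
  · intro x hx y hy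
    rw [Option.mem_def] at hx hy
    simp only [hx, hy, Option.map_some, Option.some.injEq] at hl₁ hh₂
    rw [hl₁, hh₂]
  · rwa [List.head?_append_of_ne_nil _ hne₁]
  · rwa [List.getLast?_append_of_ne_nil _ hne₂]

theorem of_append_cons {f : V × V} (h : IsValidPath E a c (p₁ ++ f :: p₂)) (hp₁ : p₁ ≠ []) :
    IsValidPath E a f.1 p₁ ∧ IsValidPath E f.1 c (f :: p₂) := by
  obtain ⟨e, t, rfl⟩ := List.exists_cons_of_ne_nil hp₁
  obtain ⟨hE, hC, hh, hl⟩ := h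
  obtain ⟨hC₁, hC₂, hjoin⟩ := List.isChain_append.1 hC
  refine ⟨⟨?_, hC₁, ?_, ?_⟩, ⟨?_, hC₂, ?_, ?_⟩⟩
  · grind
  · simpa using hh
  · simpa [List.getLast?_eq_some_getLast] using hjoin
  · grind
  · simp
  · rwa [List.getLast?_append_cons] at hl

theorem intermediateNodes_append (h₁ : IsValidPath E a b p₁) (h₂ : IsValidPath E b c p₂) :
    intermediateNodes (p₁ ++ p₂) = intermediateNodes p₁ ++ b :: intermediateNodes p₂ := by
  obtain ⟨e, t, rfl⟩ := List.exists_cons_of_ne_nil h₂.ne_nil_s5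
  have := h₂.2.2.1
  simp_all [intermediateNodes, List.tail_append_of_ne_nil h₁.ne_nil_s5]

theorem exists_split_of_mem (h : IsValidPath E a c p) (hb : b ∈ intermediateNodes p) :
    ∃ p₁ p₂, p = p₁ ++ p₂ ∧ IsValidPath E a b p₁ ∧ IsValidPath E b c p₂ ∧
      b ∉ intermediateNodes p₁ := by
  classical
  obtain ⟨e, t, rfl⟩ := List.exists_cons_of_ne_nil h.ne_nil_s5
  obtain ⟨f, hf⟩ : ∃ f, t.find? (·.1 = b) = some f := by
    rw [← Option.isSome_iff_exists, List.find?_isSome]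
    simpa [intermediateNodes] using hb
  obtain ⟨hfb, as, bs, rfl, has⟩ := List.find?_eq_some_iff_append.1 hf
  simp only [decide_eq_true_eq] at hfb
  subst hfb
  obtain ⟨h₁, h₂⟩ := of_append_cons (p₁ := e :: as) h (List.cons_ne_nil _ _)
  refine ⟨e :: as, f :: bs, rfl, h₁, h₂, ?_⟩
  simp only [intermediateNodes, List.tail_cons, List.mem_map, not_exists, not_and]
  intro x hx hxf
  simpa [hxf] using has x hx

end IsValidPath

theorem coe_bottleneck (s : V × V → ℕ) {p : List (V × V)} (hp : p ≠ []) :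
    WithTop.some (bottleneck s p) = (p.map s).minimum := by
  rw [bottleneck, ← List.coe_minimum_of_length_pos (by simpa [List.length_pos_iff] using hp)]
  rfl

theorem bottleneck_append (s : V × V → ℕ) {p₁ p₂ : List (V × V)} (h₁ : p₁ ≠ []) (h₂ : p₂ ≠ []) :
    bottleneck s (p₁ ++ p₂) = min (bottleneck s p₁) (bottleneck s p₂) := by
  apply WithTop.coe_injective
  rw [WithTop.coe_min, coe_bottleneck s h₁, coe_bottleneck s h₂,
    coe_bottleneck s (List.append_ne_nil_of_left_ne_nil h₁ _), List.map_append,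
    List.minimum_append]

theorem bottleneck_mem_range (s : V × V → ℕ) {p : List (V × V)} (hp : p ≠ []) :
    bottleneck s p ∈ Set.range s := by
  obtain ⟨e, -, he⟩ := List.mem_map.1 (List.minimum_mem (coe_bottleneck s hp).symm)
  exact ⟨e, he⟩

theorem finite_setOf_bottleneck [Finite V] (E : Set (V × V)) (s : V × V → ℕ) (a b : V)
    (P : List (V × V) → Prop) :
    {x : WithBot ℕ | ∃ p, IsValidPath E a b p ∧ P p ∧ x = bottleneck s p}.Finite :=
  ((Set.finite_range s).image (↑)).subset <| by
    rintro _ ⟨p, hp, -, rfl⟩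
    exact Set.mem_image_of_mem _ (bottleneck_mem_range s hp.ne_nil_s5)

section Widest

variable {n : ℕ} {E : Set (Fin n × Fin n)} {s : Fin n × Fin n → ℕ} {K L : Set (Fin n)}
  {i j k : Fin n}

theorem bottleneck_le_restrictedWidest {p : List (Fin n × Fin n)} (hp : IsValidPath E i j p)
    (hK : ∀ v ∈ intermediateNodes p, v ∈ K) :
    (bottleneck s p : WithBot ℕ) ≤ restrictedWidest E s K i j :=
  le_csSup (finite_setOf_bottleneck E s i j _).bddAbove ⟨p, hp, hK, rfl⟩

theorem restrictedWidest_le {x : WithBot ℕ}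
    (h : ∀ p, IsValidPath E i j p → (∀ v ∈ intermediateNodes p, v ∈ K) →
      (bottleneck s p : WithBot ℕ) ≤ x) :
    restrictedWidest E s K i j ≤ x :=
  csSup_le' <| by
    rintro _ ⟨p, hp, hK, rfl⟩
    exact h p hp hK

theorem exists_bottleneck_eq_restrictedWidest (h : restrictedWidest E s K i j ≠ ⊥) :
    ∃ p, IsValidPath E i j p ∧ (∀ v ∈ intermediateNodes p, v ∈ K) ∧
      (bottleneck s p : WithBot ℕ) = restrictedWidest E s K i j := by
  have hne : Set.Nonempty {x : WithBot ℕ | ∃ p, IsValidPath E i j p ∧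
      (∀ v ∈ intermediateNodes p, v ∈ K) ∧ x = bottleneck s p} :=
    Set.nonempty_iff_ne_empty.2 fun h₀ => h (by rw [restrictedWidest]; exact h₀ ▸ csSup_empty)
  obtain ⟨p, hp, hK, hsup⟩ := hne.csSup_mem (finite_setOf_bottleneck E s i j _)
  exact ⟨p, hp, hK, hsup.symm⟩

theorem restrictedWidest_mono (hKL : K ⊆ L) :
    restrictedWidest E s K i j ≤ restrictedWidest E s L i j :=
  restrictedWidest_le fun _ hp hK => bottleneck_le_restrictedWidest hp fun v hv => hKL (hK v hv)

theorem min_restrictedWidest_le_union_singleton :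
    min (restrictedWidest E s K i k) (restrictedWidest E s K k j) ≤
      restrictedWidest E s (K ∪ {k}) i j := by
  rcases eq_or_ne (restrictedWidest E s K i k) ⊥ with h₁ | h₁
  · simp [h₁]
  rcases eq_or_ne (restrictedWidest E s K k j) ⊥ with h₂ | h₂
  · simp [h₂]
  obtain ⟨p₁, hp₁, hK₁, hW₁⟩ := exists_bottleneck_eq_restrictedWidest h₁
  obtain ⟨p₂, hp₂, hK₂, hW₂⟩ := exists_bottleneck_eq_restrictedWidest h₂
  rw [← hW₁, ← hW₂, Nat.cast_withBot, Nat.cast_withBot, ← WithBot.coe_min,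
    ← bottleneck_append s hp₁.ne_nil_s5 hp₂.ne_nil_s5]
  refine bottleneck_le_restrictedWidest (hp₁.append hp₂) fun v hv => ?_
  rw [hp₁.intermediateNodes_append hp₂] at hv
  grind

theorem bottleneck_le_restrictedWidest_of_start {p : List (Fin n × Fin n)}
    (hp : IsValidPath E k j p) (hK : ∀ v ∈ intermediateNodes p, v ∈ K ∪ {k}) :
    (bottleneck s p : WithBot ℕ) ≤ restrictedWidest E s K k j := by
  by_cases hk : k ∈ intermediateNodes p
  · obtain ⟨p₁, p₂, rfl, hp₁, hp₂, -⟩ := hp.exists_split_of_mem hk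
    have hK₂ : ∀ v ∈ intermediateNodes p₂, v ∈ K ∪ {k} := fun v hv =>
      hK v (by simp [hp₁.intermediateNodes_append hp₂, hv])
    calc (bottleneck s (p₁ ++ p₂) : WithBot ℕ) ≤ bottleneck s p₂ := by
          rw [bottleneck_append s hp₁.ne_nil_s5 hp₂.ne_nil_s5]
          exact WithBot.coe_le_coe.2 (min_le_right _ _)
      _ ≤ restrictedWidest E s K k j := bottleneck_le_restrictedWidest_of_start hp₂ hK₂
  · exact bottleneck_le_restrictedWidest hp fun v hv =>
      (hK v hv).resolve_right (ne_of_mem_of_not_mem hv hk)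
termination_by p.length
decreasing_by
  subst_vars
  simpa using List.length_pos_iff.2 hp₁.ne_nil_s5

end Widest

theorem farsec_floyd_warshall_update_general {n : ℕ} (E : Set (Fin n × Fin n))
    (s : Fin n × Fin n → ℕ) (K : Set (Fin n)) (k : Fin n)
    (i j : Fin n) :
    restrictedWidest E s (K ∪ {k}) i j =
      max (restrictedWidest E s K i j)
        (min (restrictedWidest E s K i k) (restrictedWidest E s K k j)) := by
  refine le_antisymm (restrictedWidest_le fun p hp hK => ?_)
    (max_le (restrictedWidest_mono Set.subset_union_left) min_restrictedWidest_le_union_singleton)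
  by_cases hk : k ∈ intermediateNodes p
  · obtain ⟨p₁, p₂, rfl, hp₁, hp₂, hk₁⟩ := hp.exists_split_of_mem hk
    rw [hp₁.intermediateNodes_append hp₂] at hK
    rw [bottleneck_append s hp₁.ne_nil_s5 hp₂.ne_nil_s5, Nat.cast_withBot, WithBot.coe_min]
    refine le_max_of_le_right (min_le_min ?_ ?_)
    · exact bottleneck_le_restrictedWidest hp₁ fun v hv =>
        (hK v (by simp [hv])).resolve_right (ne_of_mem_of_not_mem hv hk₁)
    · exact bottleneck_le_restrictedWidest_of_start hp₂ fun v hv => hK v (by simp [hv])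
  · exact le_max_of_le_left (bottleneck_le_restrictedWidest hp fun v hv =>
      (hK v hv).resolve_right (ne_of_mem_of_not_mem hv hk))

/-- Correctness of the Floyd–Warshall update for widest paths: allowing one extra
intermediate node `k ∉ K` updates the restricted widest-path value by
`W_{K ∪ {k}}(i, j) = max (W_K(i, j)) (min (W_K(i, k)) (W_K(k, j)))`. -/
theorem farsec_floyd_warshall_update {n : ℕ} (E : Set (Fin n × Fin n))
    (s : Fin n × Fin n → ℕ) (K : Set (Fin n)) (k : Fin n) (hk : k ∉ K)
    (i j : Fin n) :
    restrictedWidest E s (K ∪ {k}) i j =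
      max (restrictedWidest E s K i j)
        (min (restrictedWidest E s K i k) (restrictedWidest E s K k j)) :=
  farsec_floyd_warshall_update_general E s K k i j
end
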